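/- arXiv:2307.06217 — 2 statements merged into one kernel-verified Lean document; each statement's English description precedes it below -/
import Mathlib

section
/- Let K_S, α > 0, n > 0, m := 1 − 1/n, and θ_r < θ_S, and define for h < 0 the function β(θ(h)) = K_S [1 − (1 − φ(h))^m]² / ( m n α^n (θ_S − θ_r) |h|^{n−1} φ(h)^{m/2 + 1} ), where φ(h) := 1/(1 + |αh|^n). Then lim_{h → 0⁻} β(θ(h)) = +∞ if and only if n > 1. -/
open Filter Topology

/-- In the Van Genuchten–Mualem model with `n > 0` and
`m = 1 − 1/n`, the water diffusivity
`β(θ(h)) = K_S [1 − (1 − φ(h))^m]² / (m n α^n (θ_S − θ_r) |h|^{n−1} φ(h)^{m/2+1})`,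
`φ(h) = 1/(1 + |αh|^n)`, blows up as `h → 0⁻` if and only if `n > 1`. -/
theorem vanGenuchten_diffusivity_blowup_iff
    (KS α n m θr θS : ℝ) (hKS : 0 < KS) (hα : 0 < α) (hn : 0 < n)
    (hm : m = 1 - 1 / n) (hθ : θr < θS)
    (φ βθ : ℝ → ℝ)
    (hφdef : ∀ h : ℝ, φ h = 1 / (1 + |α * h| ^ n))
    (hβθdef : ∀ h < (0:ℝ), βθ h =
      KS * (1 - (1 - φ h) ^ m) ^ 2 /
        (m * n * α ^ n * (θS - θr) * |h| ^ (n - 1) * (φ h) ^ (m / 2 + 1))) :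
    Tendsto βθ (nhdsWithin 0 (Set.Iio (0:ℝ))) atTop ↔ 1 < n := by
  have hθS : 0 < θS - θr := sub_pos.mpr hθ
  -- basic facts about φ
  have hφpos : ∀ h : ℝ, 0 < φ h := by
    intro h
    rw [hφdef]
    have : (0:ℝ) ≤ |α * h| ^ n := Real.rpow_nonneg (abs_nonneg _) n
    positivity
  have hφle : ∀ h : ℝ, φ h ≤ 1 := by
    intro h
    rw [hφdef]
    have h0 : (0:ℝ) ≤ |α * h| ^ n := Real.rpow_nonneg (abs_nonneg _) n
    rw [div_le_one (by linarith)]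
    linarith
  -- limit of φ at 0⁻
  have habs : Tendsto (fun h : ℝ => |α * h|) (𝓝[<] 0) (𝓝 0) := by
    have : Tendsto (fun h : ℝ => |α * h|) (𝓝 0) (𝓝 |α * 0|) := by
      exact ((continuous_const.mul continuous_id).abs).tendsto 0
    simpa using this.mono_left nhdsWithin_le_nhds
  have habsn : Tendsto (fun h : ℝ => |α * h| ^ n) (𝓝[<] 0) (𝓝 0) := by
    have hc : ContinuousAt (fun x : ℝ => x ^ n) 0 :=
      Real.continuousAt_rpow_const 0 n (Or.inr hn.le)
    have := hc.tendsto.comp habs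
    simpa [Function.comp_def, Real.zero_rpow hn.ne'] using this
  have hφlim : Tendsto φ (𝓝[<] 0) (𝓝 1) := by
    have : Tendsto (fun h : ℝ => 1 / (1 + |α * h| ^ n)) (𝓝[<] 0) (𝓝 (1 / (1 + 0))) :=
      tendsto_const_nhds.div (tendsto_const_nhds.add habsn) (by norm_num)
    simpa [hφdef] using (this.congr fun h => (hφdef h).symm)
  constructor
  · -- blow-up ⟹ n > 1
    intro hT
    by_contra hle
    push_neg at hle
    have hm0 : m ≤ 0 := by
      rw [hm]
      have : 1 ≤ 1 / n := by
        rw [le_div_iff₀ hn]; linarith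
      linarith
    have hneg : ∀ h < (0:ℝ), βθ h ≤ 0 := by
      intro h hh
      rw [hβθdef h hh]
      apply div_nonpos_of_nonneg_of_nonpos
      · positivity
      · have h1 : 0 < |h| ^ (n - 1) := Real.rpow_pos_of_pos (abs_pos.mpr hh.ne) _
        have h2 : 0 < (φ h) ^ (m / 2 + 1) := Real.rpow_pos_of_pos (hφpos h) _
        have h3 : 0 < α ^ n := Real.rpow_pos_of_pos hα n
        have : 0 < n * α ^ n * (θS - θr) * |h| ^ (n - 1) * (φ h) ^ (m / 2 + 1) := by
          positivity
        nlinarith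
    have h1 : ∀ᶠ h in 𝓝[<] (0:ℝ), (1:ℝ) ≤ βθ h := hT.eventually_ge_atTop 1
    have h2 : ∀ᶠ h in 𝓝[<] (0:ℝ), βθ h ≤ 0 :=
      eventually_nhdsWithin_of_forall fun h hh => hneg h hh
    obtain ⟨h, hh1, hh2⟩ := (h1.and h2).exists
    linarith
  · -- n > 1 ⟹ blow-up
    intro hn1
    have hmpos : 0 < m := by
      rw [hm]
      have : 1 / n < 1 := by
        rw [div_lt_one hn]; linarith
      linarith
    -- numerator tends to KS
    have hAlim : Tendsto (fun h : ℝ => (1 - φ h) ^ m) (𝓝[<] 0) (𝓝 0) := by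
      have h1φ : Tendsto (fun h : ℝ => 1 - φ h) (𝓝[<] 0) (𝓝 0) := by
        have := hφlim.const_sub 1
        simpa using this
      have hc : ContinuousAt (fun x : ℝ => x ^ m) 0 :=
        Real.continuousAt_rpow_const 0 m (Or.inr hmpos.le)
      have := hc.tendsto.comp h1φ
      simpa [Function.comp_def, Real.zero_rpow hmpos.ne'] using this
    have hnum : Tendsto (fun h : ℝ => KS * (1 - (1 - φ h) ^ m) ^ 2) (𝓝[<] 0) (𝓝 KS) := by
      have : Tendsto (fun h : ℝ => KS * (1 - (1 - φ h) ^ m) ^ 2) (𝓝[<] 0)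
          (𝓝 (KS * (1 - 0) ^ 2)) :=
        tendsto_const_nhds.mul ((tendsto_const_nhds.sub hAlim).pow 2)
      simpa using this
    -- denominator tends to 0 within (0, ∞)
    have hBlim : Tendsto (fun h : ℝ => (φ h) ^ (m / 2 + 1)) (𝓝[<] 0) (𝓝 1) := by
      have hc : ContinuousAt (fun x : ℝ => x ^ (m / 2 + 1)) 1 :=
        Real.continuousAt_rpow_const 1 (m / 2 + 1) (Or.inl one_ne_zero)
      have := hc.tendsto.comp hφlim
      simpa [Function.comp_def, Real.one_rpow] using this
    have hhlim : Tendsto (fun h : ℝ => |h| ^ (n - 1)) (𝓝[<] 0) (𝓝 0) := by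
      have habs0 : Tendsto (fun h : ℝ => |h|) (𝓝[<] 0) (𝓝 0) := by
        have : Tendsto (fun h : ℝ => |h|) (𝓝 0) (𝓝 |(0:ℝ)|) := continuous_abs.tendsto 0
        simpa using this.mono_left nhdsWithin_le_nhds
      have hc : ContinuousAt (fun x : ℝ => x ^ (n - 1)) 0 :=
        Real.continuousAt_rpow_const 0 (n - 1) (Or.inr (by linarith : (0:ℝ) ≤ n - 1))
      have := hc.tendsto.comp habs0
      simpa [Function.comp_def, Real.zero_rpow (by linarith : n - 1 ≠ 0)] using this
    set D : ℝ → ℝ := fun h =>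
      m * n * α ^ n * (θS - θr) * |h| ^ (n - 1) * (φ h) ^ (m / 2 + 1) with hD
    have hDlim : Tendsto D (𝓝[<] 0) (𝓝 0) := by
      have : Tendsto D (𝓝[<] 0) (𝓝 (m * n * α ^ n * (θS - θr) * 0 * 1)) :=
        (((tendsto_const_nhds.mul hhlim)).mul hBlim)
      simpa using this
    have hDpos : ∀ᶠ h in 𝓝[<] (0:ℝ), 0 < D h := by
      apply eventually_nhdsWithin_of_forall
      intro h hh
      have h1 : 0 < |h| ^ (n - 1) := Real.rpow_pos_of_pos (abs_pos.mpr (ne_of_lt hh)) _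
      have h2 : 0 < (φ h) ^ (m / 2 + 1) := Real.rpow_pos_of_pos (hφpos h) _
      have h3 : 0 < α ^ n := Real.rpow_pos_of_pos hα n
      positivity
    have hDzero : Tendsto D (𝓝[<] 0) (𝓝[>] 0) := by
      rw [tendsto_nhdsWithin_iff]
      exact ⟨hDlim, hDpos⟩
    have hDinv : Tendsto (fun h => (D h)⁻¹) (𝓝[<] (0:ℝ)) atTop :=
      hDzero.inv_tendsto_nhdsGT_zero
    have hmain : Tendsto (fun h : ℝ =>
        KS * (1 - (1 - φ h) ^ m) ^ 2 * (D h)⁻¹) (𝓝[<] 0) atTop :=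
      hnum.pos_mul_atTop hKS hDinv
    refine hmain.congr' ?_
    filter_upwards [self_mem_nhdsWithin] with h hh
    rw [hβθdef h hh, div_eq_mul_inv]
end

section
/- In the Van Genuchten–Mualem model, with parameters K_S, α > 0, n > 1, m := 1 − 1/n, the hydraulic conductivity k(ψ) = K_S φ(ψ)^{m/2}[1 − (1 − φ(ψ))^m]², where φ(ψ) := 1/(1 + |αψ|^n), satisfies 0 < k(ψ) ≤ K_S for every ψ ≤ 0, and k is monotonically increasing on (−∞, 0). -/
open Set

/-!
The conductivity is `K_S g(φ)` with `g(s) = s^{m/2} (1 - (1 - s)^m)²` a function of the effective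
saturation `φ ∈ (0, 1]` alone. Since `0 < m`, `g` is increasing on `[0, 1]`, positive on `(0, 1]`
and `g 1 = 1`; and `φ(ψ)` increases as `ψ ↑ 0` because `|αψ|` decreases. Composing gives the
bounds and the monotonicity.
-/

noncomputable section

def effectiveSaturation (α n ψ : ℝ) : ℝ := 1 / (1 + |α * ψ| ^ n)

def mualemConductivity (KS m s : ℝ) : ℝ := KS * s ^ (m / 2) * (1 - (1 - s) ^ m) ^ 2

end

lemma effectiveSaturation_mem_Ioc (α n ψ : ℝ) : effectiveSaturation α n ψ ∈ Ioc 0 1 := by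
  have hpos : 0 < 1 + |α * ψ| ^ n := by positivity
  refine ⟨by unfold effectiveSaturation; positivity, ?_⟩
  rw [effectiveSaturation, div_le_one hpos]
  linarith [Real.rpow_nonneg (abs_nonneg (α * ψ)) n]

lemma effectiveSaturation_monotoneOn (α : ℝ) {n : ℝ} (hn : 0 ≤ n) :
    MonotoneOn (effectiveSaturation α n) (Iic 0) := by
  intro ψ₁ h₁ ψ₂ h₂ h12
  have habs : |α * ψ₂| ≤ |α * ψ₁| := by
    rw [abs_mul, abs_mul]
    exact mul_le_mul_of_nonneg_left (abs_le_abs_of_nonpos h₂ h12) (abs_nonneg α)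
  exact one_div_le_one_div_of_le (by positivity)
    (add_le_add_right (Real.rpow_le_rpow (abs_nonneg _) habs hn) 1)

lemma mualemConductivity_pos {KS m s : ℝ} (hKS : 0 < KS) (hm : 0 < m) (hs : s ∈ Ioc 0 1) :
    0 < mualemConductivity KS m s := by
  have hlt : (1 - s) ^ m < 1 := Real.rpow_lt_one (by linarith [hs.2]) (by linarith [hs.1]) hm
  have hgap : 0 < 1 - (1 - s) ^ m := by linarith
  have hs0 := hs.1
  unfold mualemConductivity
  positivity

lemma mualemConductivity_monotoneOn {KS m : ℝ} (hKS : 0 ≤ KS) (hm : 0 ≤ m) :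
    MonotoneOn (mualemConductivity KS m) (Icc 0 1) := by
  intro a ha b hb hab
  have hpow : a ^ (m / 2) ≤ b ^ (m / 2) := Real.rpow_le_rpow ha.1 hab (by linarith)
  have hsq : (1 - (1 - a) ^ m) ^ 2 ≤ (1 - (1 - b) ^ m) ^ 2 := by
    have hle : (1 - b) ^ m ≤ (1 - a) ^ m := Real.rpow_le_rpow (by linarith [hb.2]) (by linarith) hm
    have hone : (1 - a) ^ m ≤ 1 := Real.rpow_le_one (by linarith [ha.2]) (by linarith [ha.1]) hm
    exact pow_le_pow_left₀ (by linarith) (by linarith) 2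
  have hb0 := hb.1
  unfold mualemConductivity
  gcongr

lemma mualemConductivity_one (KS : ℝ) {m : ℝ} (hm : m ≠ 0) : mualemConductivity KS m 1 = KS := by
  simp [mualemConductivity, Real.zero_rpow hm]

theorem vanGenuchten_conductivity_bounds_and_monotone_general
    (KS α n m : ℝ) (hKS : 0 < KS) (hn : 1 < n) (hm : m = 1 - 1 / n)
    (φ k : ℝ → ℝ)
    (hφdef : ∀ ψ : ℝ, φ ψ = 1 / (1 + |α * ψ| ^ n))
    (hkdef : ∀ ψ : ℝ, k ψ = KS * (φ ψ) ^ (m / 2) * (1 - (1 - φ ψ) ^ m) ^ 2) :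
    (∀ ψ ≤ (0:ℝ), 0 < k ψ ∧ k ψ ≤ KS) ∧ MonotoneOn k (Set.Iio (0:ℝ)) := by
  have hm0 : 0 < m := by
    rw [hm, sub_pos, div_lt_one (by linarith)]
    exact hn
  have hφ : φ = effectiveSaturation α n := funext hφdef
  have hk : k = mualemConductivity KS m ∘ effectiveSaturation α n := by
    funext ψ; rw [hkdef, hφ]; rfl
  have hg := mualemConductivity_monotoneOn hKS.le hm0.le
  have hφIcc (ψ : ℝ) : effectiveSaturation α n ψ ∈ Icc 0 1 :=
    Ioc_subset_Icc_self (effectiveSaturation_mem_Ioc α n ψ)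
  subst hk
  refine ⟨fun ψ _ => ⟨mualemConductivity_pos hKS hm0 (effectiveSaturation_mem_Ioc α n ψ), ?_⟩, ?_⟩
  · calc mualemConductivity KS m (effectiveSaturation α n ψ)
        ≤ mualemConductivity KS m 1 := hg (hφIcc ψ) (right_mem_Icc.2 zero_le_one) (hφIcc ψ).2
      _ = KS := mualemConductivity_one KS hm0.ne'
  · exact (hg.comp (effectiveSaturation_monotoneOn α (by linarith)) fun ψ _ => hφIcc ψ).mono
      Iio_subset_Iic_self

/-- In the Van Genuchten–Mualem model, the hydraulic conductivity
`k(ψ) = K_S φ(ψ)^{m/2}[1 − (1 − φ(ψ))^m]²`, `φ(ψ) = 1/(1 + |αψ|^n)`,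
`m = 1 − 1/n`, satisfies `0 < k(ψ) ≤ K_S` for every `ψ ≤ 0`, and `k` is
monotonically increasing on `(−∞, 0)`. -/
theorem vanGenuchten_conductivity_bounds_and_monotone
    (KS α n m : ℝ) (hKS : 0 < KS) (hα : 0 < α) (hn : 1 < n) (hm : m = 1 - 1 / n)
    (φ k : ℝ → ℝ)
    (hφdef : ∀ ψ : ℝ, φ ψ = 1 / (1 + |α * ψ| ^ n))
    (hkdef : ∀ ψ : ℝ, k ψ = KS * (φ ψ) ^ (m / 2) * (1 - (1 - φ ψ) ^ m) ^ 2) :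
    (∀ ψ ≤ (0:ℝ), 0 < k ψ ∧ k ψ ≤ KS) ∧ MonotoneOn k (Set.Iio (0:ℝ)) :=
  vanGenuchten_conductivity_bounds_and_monotone_general KS α n m hKS hn hm φ k hφdef hkdef
end
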